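/- arXiv:2005.09236 — 4 statements merged into one kernel-verified Lean document; each statement's English description precedes it below -/
import Mathlib

section
/- Let f : ℝ → ℝ be continuous with f(x) < 0 for all x ∈ (0, θ) where 0 < θ < 1. Suppose p : [0,∞) → ℝ is twice continuously differentiable, satisfies p''(r) = (2r/σ - (d-1)/r) p'(r) - f(p(r)) for r > 0 (with σ > 0, d ≥ 1), p(0) = α ∈ (0, θ), p'(0) = 0, and 0 ≤ p(r) ≤ θ on an interval [0, R]. Then the function r ↦ e^{-r²/σ} r^{d-1} p'(r) is monotone non-decreasing on [0, R]. -/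
open Real Set

/-- Monotonicity of `r ↦ e^{-r²/σ} r^{d-1} p'(r)` for the radial bistable ODE with
Gaussian drift, as long as `0 ≤ p ≤ θ`. -/
theorem stmt0 (f : ℝ → ℝ) (θ σ α R : ℝ) (d : ℕ) (p : ℝ → ℝ)
    (hf : Continuous f) (hθ : θ ∈ Set.Ioo (0:ℝ) 1)
    (hfneg : ∀ x ∈ Set.Ioo 0 θ, f x < 0)
    (hσ : 0 < σ) (hd : 1 ≤ d)
    (hp : ContDiff ℝ 2 p)
    (hode : ∀ r > 0, deriv (deriv p) r
      = (2*r/σ - ((d:ℝ)-1)/r) * deriv p r - f (p r))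
    (hα : α ∈ Set.Ioo 0 θ) (hp0 : p 0 = α) (hp'0 : deriv p 0 = 0)
    (hR : 0 < R) (hbound : ∀ r ∈ Set.Icc 0 R, 0 ≤ p r ∧ p r ≤ θ) :
    MonotoneOn (fun r => Real.exp (-r^2/σ) * r^(d-1) * deriv p r) (Set.Icc 0 R) := by
  obtain ⟨n, rfl⟩ := Nat.exists_eq_add_of_le hd
  -- p' is C¹
  have hp1 : ContDiff ℝ 1 (deriv p) := by
    have h2 : ContDiff ℝ ((1:ℕ∞)+1) p := by exact_mod_cast hp
    exact (contDiff_succ_iff_deriv.mp h2).2.2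
  have hp'diff : Differentiable ℝ (deriv p) := hp1.differentiable one_ne_zero
  -- f ≤ 0 on [0, θ]
  have hfle : ∀ x ∈ Set.Icc 0 θ, f x ≤ 0 := by
    have hcl : Set.Icc 0 θ ⊆ {x | f x ≤ 0} := by
      rw [← closure_Ioo (ne_of_lt hθ.1)]
      exact closure_minimal (fun x hx => (hfneg x hx).le)
        (isClosed_le hf continuous_const)
    exact fun x hx => hcl hx
  set g : ℝ → ℝ := fun r => Real.exp (-r^2/σ) * r^(1+n-1) * deriv p r with hg
  have hsub : 1 + n - 1 = n := by omega
  -- derivative of g at r > 0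
  have hderiv : ∀ r ∈ Set.Ioo 0 R,
      HasDerivAt g (Real.exp (-r^2/σ) * r^n * (-f (p r))) r := by
    intro r hr
    have hr0 : r ≠ 0 := ne_of_gt hr.1
    have hA : HasDerivAt (fun x : ℝ => Real.exp (-x^2/σ))
        (Real.exp (-r^2/σ) * (-(2*r^1)/σ)) r := by
      exact ((hasDerivAt_pow 2 r).neg.div_const σ).exp
    have hB : HasDerivAt (fun x : ℝ => x^(1+n-1)) ((n:ℝ) * r^(n-1)) r := by
      simpa [hsub] using hasDerivAt_pow n r
    have hC : HasDerivAt (deriv p)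
        ((2*r/σ - (((1+n:ℕ):ℝ)-1)/r) * deriv p r - f (p r)) r := by
      have := (hp'diff r).hasDerivAt
      rwa [hode r hr.1] at this
    have := ((hA.mul hB).mul hC)
    refine this.congr_deriv (Eq.symm ?_)
    simp only [Pi.mul_apply, hsub]
    have key : (n:ℝ) * r^(n-1) = (n:ℝ) * r^n / r := by
      cases n with
      | zero => simp
      | succ m =>
        rw [show m+1-1 = m from rfl, pow_succ]
        field_simp
    rw [key]
    push_cast
    field_simp
    ring
  have hcont : ContinuousOn g (Set.Icc 0 R) := by
    apply Continuous.continuousOn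
    exact ((Real.continuous_exp.comp ((continuous_pow 2).neg.div_const σ)).mul
      (continuous_pow _)).mul hp1.continuous
  have hint : interior (Set.Icc (0:ℝ) R) = Set.Ioo 0 R := interior_Icc
  apply monotoneOn_of_deriv_nonneg (convex_Icc 0 R) hcont
  · rw [hint]
    exact fun r hr => ((hderiv r hr).differentiableAt).differentiableWithinAt
  · rw [hint]
    intro r hr
    rw [(hderiv r hr).deriv]
    have hpr := hbound r ⟨hr.1.le, hr.2.le⟩
    have hfpr : f (p r) ≤ 0 := hfle _ ⟨hpr.1, hpr.2⟩
    have h0 : (0:ℝ) ≤ -f (p r) := by linarith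
    exact mul_nonneg (mul_nonneg (Real.exp_pos _).le (pow_nonneg hr.1.le _)) h0
end

section
/- Let f : ℝ → ℝ be continuous and bounded on [0,1], let M := sup_{s ∈ (0,1)} (-f(s)/s) < ∞, and let σ > 0. Suppose p : [0, R] → ℝ solves p''(r) = (2r/σ - (d-1)/r) p'(r) - f(p(r)) with p(0) = α > 0, p'(0) = 0, 0 ≤ p ≤ θ and p' ≥ 0 on [0, R]. Define ξ(r) := (p(r)² + p'(r)²)/2. Then ξ'(r) ≤ ξ(r)(M + 1 + 4r/σ) for all r ∈ (0, R), and consequently ξ(r) ≤ (α²/2) e^{(M+1)r + 2r²/σ} for all r ∈ [0, R]. -/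
open Real Set Filter Topology

/-- Grönwall-type estimate for `ξ = (p² + p'²)/2` along the radial bistable ODE. -/
theorem stmt1 (f : ℝ → ℝ) (θ σ α R M : ℝ) (d : ℕ) (p : ℝ → ℝ)
    (hf : Continuous f) (hfb : ∃ Cf, ∀ x ∈ Set.Icc (0:ℝ) 1, |f x| ≤ Cf)
    (hθ : θ ∈ Set.Ioo (0:ℝ) 1) (hσ : 0 < σ) (hd : 1 ≤ d)
    (hM : ∀ s ∈ Set.Ioo (0:ℝ) 1, -f s ≤ M * s)
    (hp : ContDiff ℝ 2 p)
    (hode : ∀ r ∈ Set.Ioo 0 R, deriv (deriv p) r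
      = (2*r/σ - ((d:ℝ)-1)/r) * deriv p r - f (p r))
    (hα : 0 < α) (hp0 : p 0 = α) (hp'0 : deriv p 0 = 0) (hR : 0 < R)
    (hbound : ∀ r ∈ Set.Icc 0 R, 0 ≤ p r ∧ p r ≤ θ ∧ 0 ≤ deriv p r) :
    (∀ r ∈ Set.Ioo 0 R,
      deriv (fun r => ((p r)^2 + (deriv p r)^2)/2) r
        ≤ (((p r)^2 + (deriv p r)^2)/2) * (M + 1 + 4*r/σ)) ∧
    (∀ r ∈ Set.Icc 0 R,
      ((p r)^2 + (deriv p r)^2)/2 ≤ α^2/2 * Real.exp ((M+1)*r + 2*r^2/σ)) := by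
  obtain ⟨hθ0, hθ1⟩ := hθ
  have h2 : ContDiff ℝ ((1:ℕ) + 1) p := by exact_mod_cast hp
  have hdp : Differentiable ℝ p := hp.differentiable (by norm_num)
  have hdp' : Differentiable ℝ (deriv p) :=
    ((contDiff_succ_iff_deriv.mp h2).2.2).differentiable (by norm_num)
  have hcp'' : Continuous (deriv (deriv p)) :=
    ((contDiff_succ_iff_deriv.mp h2).2.2).continuous_deriv le_rfl
  -- p is monotone on [0,R], so α ≤ p r there
  have hmono : MonotoneOn p (Set.Icc 0 R) := by
    apply monotoneOn_of_deriv_nonneg (convex_Icc 0 R) hdp.continuous.continuousOn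
      (hdp.differentiableOn.mono interior_subset)
    intro x hx
    rw [interior_Icc] at hx
    exact (hbound x ⟨hx.1.le, hx.2.le⟩).2.2
  have hαθ : α ≤ θ := by
    have := (hbound 0 ⟨le_refl 0, hR.le⟩).2.1
    rwa [hp0] at this
  have hplow : ∀ r ∈ Set.Icc (0:ℝ) R, α ≤ p r := by
    intro r hr
    have := hmono ⟨le_refl 0, hR.le⟩ hr hr.1
    rwa [hp0] at this
  -- slope of deriv p at 0
  have hslope : Tendsto (fun h : ℝ => deriv p h / h) (𝓝[>] 0)
      (𝓝 (deriv (deriv p) 0)) := by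
    have h1 := hasDerivAt_iff_tendsto_slope.mp (hdp' 0).hasDerivAt
    have h2' : Tendsto (slope (deriv p) 0) (𝓝[>] 0) (𝓝 (deriv (deriv p) 0)) :=
      h1.mono_left (nhdsWithin_mono 0 (fun x hx => ne_of_gt hx))
    refine h2'.congr' ?_
    filter_upwards [self_mem_nhdsWithin] with h hh
    simp [slope_def_field, hp'0, div_eq_div_iff]
  set L := deriv (deriv p) 0 with hL
  have hLnn : 0 ≤ L := by
    refine ge_of_tendsto hslope ?_
    filter_upwards [Ioo_mem_nhdsGT_of_mem (Set.mem_Ico.mpr ⟨le_refl 0, hR⟩)] with h hh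
    exact div_nonneg (hbound h ⟨hh.1.le, hh.2.le⟩).2.2 hh.1.le
  -- limit of the ODE as r → 0⁺ gives d * L = -f α, hence 0 ≤ M
  have hM0 : 0 ≤ M := by
    have t1 : Tendsto (fun r => deriv (deriv p) r) (𝓝[>] 0) (𝓝 L) :=
      (hcp''.tendsto 0).mono_left nhdsWithin_le_nhds
    have t2 : Tendsto (fun r : ℝ => 2*r/σ * deriv p r - ((d:ℝ)-1) * (deriv p r / r)
        - f (p r)) (𝓝[>] 0) (𝓝 (2*0/σ * deriv p 0 - ((d:ℝ)-1) * L - f (p 0))) := by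
      refine Tendsto.sub (Tendsto.sub ?_ ?_) ?_
      · exact (((tendsto_id.const_mul (2:ℝ)).div_const σ).mul
          ((hdp'.continuous.tendsto 0))).mono_left nhdsWithin_le_nhds
      · exact hslope.const_mul _
      · exact ((hf.tendsto _).comp ((hdp.continuous.tendsto 0))).mono_left nhdsWithin_le_nhds
    have heq : (fun r => deriv (deriv p) r) =ᶠ[𝓝[>] 0]
        (fun r : ℝ => 2*r/σ * deriv p r - ((d:ℝ)-1) * (deriv p r / r) - f (p r)) := by
      filter_upwards [Ioo_mem_nhdsGT_of_mem (Set.mem_Ico.mpr ⟨le_refl 0, hR⟩)] with r hr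
      rw [hode r hr]
      field_simp
    have hlim := tendsto_nhds_unique (t1.congr' heq) t2
    rw [hp'0, hp0] at hlim
    have hdL : (d:ℝ) * L = -f α := by
      have hd1 : (1:ℝ) ≤ (d:ℝ) := by exact_mod_cast hd
      nlinarith [hlim]
    have hfα : 0 ≤ -f α := by
      rw [← hdL]
      positivity
    have := hM α ⟨hα, lt_of_le_of_lt hαθ hθ1⟩
    nlinarith
  -- derivative of ξ
  have hxi : ∀ r, HasDerivAt (fun r => ((p r)^2 + (deriv p r)^2)/2)
      (p r * deriv p r + deriv p r * deriv (deriv p) r) r := by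
    intro r
    have h1 := (hdp r).hasDerivAt
    have h2' := (hdp' r).hasDerivAt
    have := ((h1.pow 2).add (h2'.pow 2)).div_const 2
    refine this.congr_deriv ?_
    push_cast
    ring
  have part1 : ∀ r ∈ Set.Ioo 0 R,
      deriv (fun r => ((p r)^2 + (deriv p r)^2)/2) r
        ≤ (((p r)^2 + (deriv p r)^2)/2) * (M + 1 + 4*r/σ) := by
    intro r hr
    rw [(hxi r).deriv, hode r hr]
    have hr0 : 0 < r := hr.1
    have hrR : r ∈ Set.Icc (0:ℝ) R := ⟨hr0.le, hr.2.le⟩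
    have hpge : α ≤ p r := hplow r hrR
    have hple : p r ≤ θ := (hbound r hrR).2.1
    have hp'nn : 0 ≤ deriv p r := (hbound r hrR).2.2
    have hfp : -f (p r) ≤ M * p r := hM (p r) ⟨lt_of_lt_of_le hα hpge,
      lt_of_le_of_lt hple hθ1⟩
    have hdiv : (0:ℝ) ≤ ((d:ℝ)-1)/r := by
      have : (1:ℝ) ≤ (d:ℝ) := by exact_mod_cast hd
      apply div_nonneg (by linarith) hr0.le
    have hMf : 0 ≤ M * p r + f (p r) := by linarith
    have hp2 : 0 < p r := lt_of_lt_of_le hα hpge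
    have expand : ((p r)^2+(deriv p r)^2)/2*(M+1+4*r/σ)
        - (p r * deriv p r + deriv p r * ((2*r/σ - ((d:ℝ)-1)/r)*deriv p r - f (p r)))
        = (M*p r + f (p r))*deriv p r + (M+1)*(p r - deriv p r)^2/2
          + (2*r/σ)*(p r)^2 + (((d:ℝ)-1)/r)*(deriv p r)^2 := by
      field_simp
      ring
    have t1 : 0 ≤ (M*p r + f (p r))*deriv p r := mul_nonneg hMf hp'nn
    have t2 : 0 ≤ (M+1)*(p r - deriv p r)^2/2 := by
      have h1 : (0:ℝ) ≤ M+1 := by linarith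
      have := mul_nonneg h1 (sq_nonneg (p r - deriv p r))
      linarith
    have t3 : 0 ≤ (2*r/σ)*(p r)^2 := by positivity
    have t4 : 0 ≤ (((d:ℝ)-1)/r)*(deriv p r)^2 := mul_nonneg hdiv (sq_nonneg _)
    linarith
  refine ⟨part1, ?_⟩
  -- Grönwall via η = ξ · exp(-φ)
  set ξ := fun r => ((p r)^2 + (deriv p r)^2)/2 with hξ
  set φ := fun r : ℝ => (M+1)*r + 2*r^2/σ with hφ
  have hφd : ∀ r : ℝ, HasDerivAt φ (M + 1 + 4*r/σ) r := by
    intro r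
    have h1 : HasDerivAt (fun r : ℝ => (M+1)*r) (M+1) r := by
      simpa using (hasDerivAt_id r).const_mul (M+1)
    have h2' : HasDerivAt (fun r : ℝ => 2*r^2/σ) (4*r/σ) r := by
      have := ((hasDerivAt_pow 2 r).const_mul (2:ℝ)).div_const σ
      refine this.congr_deriv ?_
      push_cast; ring
    exact h1.add h2'
  set η := fun r => ξ r * Real.exp (-(φ r)) with hη
  have hηd : ∀ r : ℝ, HasDerivAt η
      ((p r * deriv p r + deriv p r * deriv (deriv p) r) * Real.exp (-(φ r))
        + ξ r * (Real.exp (-(φ r)) * -(M + 1 + 4*r/σ))) r := by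
    intro r
    exact (hxi r).mul (((hφd r).neg).exp)
  have hanti : AntitoneOn η (Set.Icc 0 R) := by
    apply antitoneOn_of_deriv_nonpos (convex_Icc 0 R)
    · exact (Continuous.mul (by fun_prop) (by fun_prop)).continuousOn
    · intro x hx
      exact (hηd x).differentiableAt.differentiableWithinAt
    · intro x hx
      rw [interior_Icc] at hx
      rw [(hηd x).deriv]
      have h1 := part1 x hx
      rw [(hxi x).deriv] at h1
      have he : (0:ℝ) < Real.exp (-(φ x)) := Real.exp_pos _
      have hξnn : 0 ≤ ξ x := by positivity
      have hξx : ξ x = ((p x)^2 + (deriv p x)^2)/2 := rfl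
      calc (p x * deriv p x + deriv p x * deriv (deriv p) x) * Real.exp (-(φ x))
            + ξ x * (Real.exp (-(φ x)) * -(M + 1 + 4*x/σ))
          = ((p x * deriv p x + deriv p x * deriv (deriv p) x)
              - ξ x * (M + 1 + 4*x/σ)) * Real.exp (-(φ x)) := by ring
        _ ≤ 0 := mul_nonpos_of_nonpos_of_nonneg (by rw [hξx]; linarith) he.le
  intro r hr
  have hη0 : η 0 = α^2/2 := by
    simp only [hη, hξ, hφ, hp0, hp'0]
    norm_num
  have hle : η r ≤ α^2/2 := by
    rw [← hη0]
    exact hanti ⟨le_refl 0, hR.le⟩ hr hr.1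
  have he : (0:ℝ) < Real.exp (φ r) := Real.exp_pos _
  have := mul_le_mul_of_nonneg_right hle he.le
  rw [hη] at this
  simp only at this
  rw [mul_assoc, ← Real.exp_add] at this
  simpa using this
end

section
/- Let N ∈ C¹ be radial on ℝ^d with N > 0, satisfying N'(r) ≥ -((d-1)/(2r)) N(r) for all r > 0. Let f be continuous with F(x) := ∫₀ˣ f, F(sθ) < 0 for s ∈ (0,1] (which holds when f < 0 on (0,θ) and sθ ∈ (0,θ]), and F(1) > 0. Suppose p : [0, R] → ℝ is a C² solution of the radial equation -(1/r^{d-1})(r^{d-1} N(r)² p'(r))' = f(p(r)) N(r)² with p(0) = sθ ∈ (0, θ), p'(0) = 0. Then defining E(r) := (1/2) p'(r)² + F(p(r)), one has E'(r) = -((d-1)/r + 2N'(r)/N(r)) p'(r)² ≤ 0, and consequently 0 < p(r) < 1 for all r ∈ (0, R]. -/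
open Real Set

/-- Admissibility of the radial path of steady states under the decay condition
`N'(r) ≥ -((d-1)/(2r)) N(r)`: the energy `E = p'²/2 + F(p)` is non-increasing and
consequently `0 < p < 1`. -/
theorem stmt13 (d : ℕ) (hd : 1 ≤ d) (N f p : ℝ → ℝ) (θ s R : ℝ)
    (hN : ContDiff ℝ 1 N) (hNpos : ∀ r, 0 < N r)
    (hNdecay : ∀ r > (0:ℝ), deriv N r ≥ -(((d:ℝ)-1)/(2*r)) * N r)
    (hf : Continuous f) (hθ : θ ∈ Set.Ioo (0:ℝ) 1) (hs : s ∈ Set.Ioc (0:ℝ) 1)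
    (hFs : (∫ t in (0:ℝ)..(s*θ), f t) < 0) (hF1 : 0 < ∫ t in (0:ℝ)..1, f t)
    (hR : 0 < R) (hp : ContDiff ℝ 2 p)
    (hode : ∀ r ∈ Set.Ioc 0 R,
      deriv (fun r => r^(d-1) * (N r)^2 * deriv p r) r
        = -(f (p r) * (N r)^2 * r^(d-1)))
    (hp0 : p 0 = s*θ) (hsθ : s*θ < θ) (hp'0 : deriv p 0 = 0) :
    (∀ r ∈ Set.Ioc 0 R,
      deriv (fun r => (deriv p r)^2/2 + ∫ t in (0:ℝ)..(p r), f t) r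
        = -(((d:ℝ)-1)/r + 2*deriv N r / N r) * (deriv p r)^2 ∧
      deriv (fun r => (deriv p r)^2/2 + ∫ t in (0:ℝ)..(p r), f t) r ≤ 0) ∧
    (∀ r ∈ Set.Ioc 0 R, 0 < p r ∧ p r < 1) := by
  obtain ⟨hθ0, hθ1⟩ := hθ
  obtain ⟨hs0, hs1⟩ := hs
  have hsθ0 : 0 < s * θ := mul_pos hs0 hθ0
  set F : ℝ → ℝ := fun x => ∫ t in (0:ℝ)..x, f t with hFdef
  have hFd : ∀ x : ℝ, HasDerivAt F (f x) x := fun x =>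
    intervalIntegral.integral_hasDerivAt_right (hf.intervalIntegrable _ _)
      (hf.stronglyMeasurableAtFilter _ _) hf.continuousAt
  have hpd : Differentiable ℝ p := hp.differentiable (by norm_num)
  have hdp : ContDiff ℝ 1 (deriv p) :=
    (contDiff_succ_iff_deriv.mp (by exact_mod_cast hp : ContDiff ℝ (1+1) p)).2.2
  have hdpd : Differentiable ℝ (deriv p) := hdp.differentiable (by norm_num)
  have hNd : Differentiable ℝ N := hN.differentiable (by norm_num)
  set E : ℝ → ℝ := fun r => (deriv p r)^2/2 + F (p r) with hEdef
  have hEd : ∀ r, HasDerivAt E (deriv p r * deriv (deriv p) r + f (p r) * deriv p r) r := by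
    intro r
    have h1 : HasDerivAt (fun r => (deriv p r)^2/2) (deriv p r * deriv (deriv p) r) r := by
      have h2 := ((hdpd r).hasDerivAt.pow 2).div_const 2
      exact h2.congr_deriv (by ring)
    have h2 : HasDerivAt (fun r => F (p r)) (f (p r) * deriv p r) r :=
      (hFd (p r)).comp r (hpd r).hasDerivAt
    exact h1.add h2
  -- the second-derivative formula from the ODE
  have key : ∀ r ∈ Set.Ioc (0:ℝ) R,
      deriv (deriv p) r
        = -(f (p r)) - (((d:ℝ)-1)/r + 2*deriv N r / N r) * deriv p r := by
    intro r hr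
    have hr0 : (0:ℝ) < r := hr.1
    have hA : (0:ℝ) < r^(d-1) := pow_pos hr0 _
    have hNr := hNpos r
    have hrne : r ≠ 0 := ne_of_gt hr0
    have hNne : N r ≠ 0 := ne_of_gt hNr
    have hpow : HasDerivAt (fun x : ℝ => x^(d-1)) (((d:ℝ)-1)/r * r^(d-1)) r := by
      have h := hasDerivAt_pow (d-1) r
      refine h.congr_deriv (Eq.symm ?_)
      rcases Nat.exists_eq_add_of_le hd with ⟨k, rfl⟩
      cases k with
      | zero => simp
      | succ k =>
        have h1 : (1 + (k+1)) - 1 = k + 1 := by omega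
        rw [h1, Nat.add_sub_cancel]
        push_cast
        field_simp
        ring
    have hN2 : HasDerivAt (fun r => (N r)^2) (2 * N r * deriv N r) r := by
      have h := (hNd r).hasDerivAt.pow 2
      exact h.congr_deriv (by ring)
    have hg : HasDerivAt (fun r => r^(d-1) * (N r)^2 * deriv p r)
        ((((d:ℝ)-1)/r * r^(d-1) * (N r)^2 + r^(d-1) * (2 * N r * deriv N r)) * deriv p r
          + r^(d-1) * (N r)^2 * deriv (deriv p) r) r :=
      (hpow.mul hN2).mul (hdpd r).hasDerivAt
    have heq := hg.deriv
    rw [hode r hr] at heq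
    have hp'' : deriv (deriv p) r =
        (-(f (p r) * (N r)^2 * r^(d-1))
          - ((((d:ℝ)-1)/r * r^(d-1) * (N r)^2 + r^(d-1) * (2 * N r * deriv N r)))
            * deriv p r) / (r^(d-1) * (N r)^2) := by
      rw [eq_div_iff (by positivity)]
      linear_combination -heq
    rw [hp'']
    field_simp
  have hcnn : ∀ r ∈ Set.Ioc (0:ℝ) R, 0 ≤ ((d:ℝ)-1)/r + 2*deriv N r / N r := by
    intro r hr
    have hr0 : (0:ℝ) < r := hr.1
    have hNr := hNpos r
    have hd1 : (1:ℝ) ≤ (d:ℝ) := by exact_mod_cast hd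
    have h := hNdecay r hr0
    have h' : -(((d:ℝ)-1) * N r) ≤ 2*r*deriv N r := by
      have h2 := mul_le_mul_of_nonneg_left h (by positivity : (0:ℝ) ≤ 2*r)
      have h3 : 2*r*(-(((d:ℝ)-1)/(2*r)) * N r) = -(((d:ℝ)-1) * N r) := by
        field_simp
      linarith [h3 ▸ h2]
    have e : ((d:ℝ)-1)/r + 2*deriv N r / N r
        = (((d:ℝ)-1)*N r + 2*r*deriv N r)/(r*N r) := by
      field_simp
    rw [e]
    apply div_nonneg _ (by positivity)
    linarith
  have part1 : ∀ r ∈ Set.Ioc (0:ℝ) R,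
      deriv E r = -(((d:ℝ)-1)/r + 2*deriv N r / N r) * (deriv p r)^2 ∧
      deriv E r ≤ 0 := by
    intro r hr
    have h1 : deriv E r = -(((d:ℝ)-1)/r + 2*deriv N r / N r) * (deriv p r)^2 := by
      rw [(hEd r).deriv, key r hr]
      ring
    refine ⟨h1, ?_⟩
    rw [h1]
    have := hcnn r hr
    nlinarith [sq_nonneg (deriv p r)]
  have hEdiff : Differentiable ℝ E := fun r => (hEd r).differentiableAt
  have hanti : AntitoneOn E (Set.Icc 0 R) := by
    apply antitoneOn_of_deriv_nonpos (convex_Icc 0 R) hEdiff.continuous.continuousOn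
      (hEdiff.differentiableOn)
    intro x hx
    rw [interior_Icc] at hx
    exact (part1 x ⟨hx.1, hx.2.le⟩).2
  have hE0 : E 0 = F (s*θ) := by
    simp [hEdef, hp'0, hp0]
  have hEneg : ∀ r ∈ Set.Icc (0:ℝ) R, E r < 0 := by
    intro r hr
    have := hanti (left_mem_Icc.mpr hR.le) hr hr.1
    rw [hE0] at this
    exact lt_of_le_of_lt this hFs
  refine ⟨part1, ?_⟩
  intro r hr
  constructor
  · by_contra hle
    push_neg at hle
    have hcont : ContinuousOn p (Set.Icc 0 r) := hpd.continuous.continuousOn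
    have hmem : (0:ℝ) ∈ Set.Icc (p r) (p 0) := by
      rw [hp0]; exact ⟨hle, hsθ0.le⟩
    obtain ⟨x, hx, hpx⟩ := intermediate_value_Icc' hr.1.le hcont hmem
    have hx0 : x ≠ 0 := by
      intro h
      rw [h, hp0] at hpx
      exact absurd hpx (ne_of_gt hsθ0)
    have hEx := hEneg x ⟨hx.1, le_trans hx.2 hr.2⟩
    have : E x = (deriv p x)^2/2 + F 0 := by rw [hEdef]; simp [hpx]
    have hF0 : F 0 = 0 := intervalIntegral.integral_same
    rw [this, hF0] at hEx
    nlinarith [sq_nonneg (deriv p x)]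
  · by_contra hge
    push_neg at hge
    have hcont : ContinuousOn p (Set.Icc 0 r) := hpd.continuous.continuousOn
    have hmem : (1:ℝ) ∈ Set.Icc (p 0) (p r) := by
      rw [hp0]; exact ⟨le_of_lt (lt_trans hsθ hθ1), hge⟩
    obtain ⟨x, hx, hpx⟩ := intermediate_value_Icc hr.1.le hcont hmem
    have hx0 : x ≠ 0 := by
      intro h
      rw [h, hp0] at hpx
      exact absurd hpx (ne_of_lt (lt_trans hsθ hθ1))
    have hEx := hEneg x ⟨hx.1, le_trans hx.2 hr.2⟩
    have : E x = (deriv p x)^2/2 + F 1 := by rw [hEdef]; simp [hpx]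
    have hF1' : (0:ℝ) < F 1 := hF1
    rw [this] at hEx
    nlinarith [sq_nonneg (deriv p x)]
end

section
/- Let p solve the scalar ODE p''(r) = g(r) with g(r) := -f(p(r)) + p'(r)(2r/σ - (d-1)/r), and suppose at some r₀ > √(σ(d-1)/2): p'(r₀) ≥ m > 0 and g(r₀) > 0. Assume moreover that for all r ≥ r₀, p ∈ ℝ, v ≥ m: -f'(p) + 2/σ + (2r/σ - (d-1)/r)² - (2r/σ - (d-1)/r) f(p)/v + (d-1)/r² ≥ 0 (where f is extended to a globally Lipschitz bounded function). Then p'(r) ≥ m and g(r) ≥ g(r₀) > 0 for all r ≥ r₀, and p'(r) → +∞ as r → ∞. -/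
open Real Set

/-- Bootstrap/continuation argument (Step 3 of the blocking-to-1 proof): if at `r₀`
the derivative is at least `m > 0` and `g(r₀) > 0`, and the function `G` in the
system `(p')' = g, g' = p'·G` is nonnegative, then `p' ≥ m`, `g ≥ g(r₀)` for
`r ≥ r₀`, and `p'(r) → +∞`. -/
theorem stmt17 (f : ℝ → ℝ) (σ r₀ m : ℝ) (d : ℕ) (p : ℝ → ℝ)
    (hf : ContDiff ℝ 1 f) (hfb : ∃ Cf, ∀ x, |f x| + |deriv f x| ≤ Cf)
    (hσ : 0 < σ) (hd : 1 ≤ d)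
    (hp : ContDiff ℝ 2 p)
    (hr₀ : Real.sqrt (σ*((d:ℝ)-1)/2) < r₀)
    (hm : 0 < m)
    (hode : ∀ r ≥ r₀, deriv (deriv p) r
      = -f (p r) + deriv p r * (2*r/σ - ((d:ℝ)-1)/r))
    (hp'r₀ : m ≤ deriv p r₀)
    (hg₀ : 0 < -f (p r₀) + deriv p r₀ * (2*r₀/σ - ((d:ℝ)-1)/r₀))
    (hG : ∀ r ≥ r₀, ∀ q : ℝ, ∀ v ≥ m,
      0 ≤ -deriv f q + 2/σ + (2*r/σ - ((d:ℝ)-1)/r)^2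
        - (2*r/σ - ((d:ℝ)-1)/r) * f q / v + ((d:ℝ)-1)/r^2) :
    (∀ r ≥ r₀, m ≤ deriv p r ∧
      (-f (p r₀) + deriv p r₀ * (2*r₀/σ - ((d:ℝ)-1)/r₀))
        ≤ -f (p r) + deriv p r * (2*r/σ - ((d:ℝ)-1)/r)) ∧
    Filter.Tendsto (deriv p) Filter.atTop Filter.atTop := by
  have hσ' : (σ:ℝ) ≠ 0 := ne_of_gt hσ
  have hr0 : (0:ℝ) < r₀ := lt_of_le_of_lt (Real.sqrt_nonneg _) hr₀
  -- smoothness facts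
  have hp2 : ContDiff ℝ (1+1 : WithTop ℕ∞) p := by
    convert hp using 2
    exact one_add_one_eq_two
  have hpd : Differentiable ℝ p := (contDiff_succ_iff_deriv.mp hp2).1
  have hp'1 : ContDiff ℝ 1 (deriv p) := (contDiff_succ_iff_deriv.mp hp2).2.2
  have hp'd : Differentiable ℝ (deriv p) := (contDiff_one_iff_deriv.mp hp'1).1
  have hp'c : Continuous (deriv p) := hp'd.continuous
  have hfd : Differentiable ℝ f := hf.differentiable one_ne_zero
  -- the formula function
  set gf : ℝ → ℝ := fun r => -f (p r) + deriv p r * (2*r/σ - ((d:ℝ)-1)/r) with hgf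
  have hgfc : ContinuousOn gf (Ioi 0) := by
    apply ContinuousOn.add
    · exact ((hfd.continuous.comp hpd.continuous).neg).continuousOn
    · apply hp'c.continuousOn.mul
      apply ContinuousOn.sub
      · exact ((continuous_const.mul continuous_id).div_const σ).continuousOn
      · exact continuousOn_const.div continuousOn_id fun x hx => ne_of_gt hx
  -- derivative of gf at positive points
  have key : ∀ s : ℝ, 0 < s → HasDerivAt gf
      (-(deriv f (p s) * deriv p s) + deriv (deriv p) s * (2*s/σ - ((d:ℝ)-1)/s)
        + deriv p s * (2/σ + ((d:ℝ)-1)/s^2)) s := by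
    intro s hs
    have h1 : HasDerivAt (fun r => f (p r)) (deriv f (p s) * deriv p s) s :=
      (hfd (p s)).hasDerivAt.comp s (hpd s).hasDerivAt
    have h2 : HasDerivAt (fun r : ℝ => 2*r/σ - ((d:ℝ)-1)/r)
        (2/σ + ((d:ℝ)-1)/s^2) s := by
      have ha : HasDerivAt (fun r : ℝ => 2*r/σ) (2/σ) s := by
        simpa using ((hasDerivAt_id s).const_mul 2).div_const σ
      have hb : HasDerivAt (fun r : ℝ => ((d:ℝ)-1)/r) (((d:ℝ)-1) * (-(s^2)⁻¹)) s := by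
        simpa [div_eq_mul_inv] using (hasDerivAt_inv (ne_of_gt hs)).const_mul ((d:ℝ)-1)
      have := ha.sub hb
      exact this.congr_deriv (by ring)
    have h3 : HasDerivAt (fun r => deriv p r * (2*r/σ - ((d:ℝ)-1)/r))
        (deriv (deriv p) s * (2*s/σ - ((d:ℝ)-1)/s) + deriv p s * (2/σ + ((d:ℝ)-1)/s^2)) s :=
      ((hp'd s).hasDerivAt).mul h2
    exact ((h1.neg).add h3).congr_deriv (by ring)
  -- nonnegativity of the derivative where p' ≥ m
  have hDpos : ∀ s ≥ r₀, m ≤ deriv p s →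
      0 ≤ -(deriv f (p s) * deriv p s) + deriv (deriv p) s * (2*s/σ - ((d:ℝ)-1)/s)
        + deriv p s * (2/σ + ((d:ℝ)-1)/s^2) := by
    intro s hs hv
    have hspos : (0:ℝ) < s := lt_of_lt_of_le hr0 hs
    have hvpos : 0 < deriv p s := lt_of_lt_of_le hm hv
    have hGs := hG s hs (p s) (deriv p s) hv
    have hode' := hode s hs
    rw [hode']
    have hEq : -(deriv f (p s) * deriv p s)
        + (-f (p s) + deriv p s * (2*s/σ - ((d:ℝ)-1)/s)) * (2*s/σ - ((d:ℝ)-1)/s)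
        + deriv p s * (2/σ + ((d:ℝ)-1)/s^2)
        = deriv p s * (-deriv f (p s) + 2/σ + (2*s/σ - ((d:ℝ)-1)/s)^2
          - (2*s/σ - ((d:ℝ)-1)/s) * f (p s) / deriv p s + ((d:ℝ)-1)/s^2) := by
      field_simp
      ring
    rw [hEq]
    exact mul_nonneg hvpos.le hGs
  -- Lemma A : gf monotone from r₀ on intervals where p' ≥ m
  have lemA : ∀ t ≥ r₀, (∀ s ∈ Ico r₀ t, m ≤ deriv p s) →
      ∀ s ∈ Icc r₀ t, gf r₀ ≤ gf s := by
    intro t ht hlow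
    have hmono : MonotoneOn gf (Icc r₀ t) := by
      apply monotoneOn_of_deriv_nonneg (convex_Icc r₀ t)
        (hgfc.mono (fun x hx => lt_of_lt_of_le hr0 hx.1))
      · intro s hs
        rw [interior_Icc] at hs
        exact ((key s (lt_trans hr0 hs.1)).differentiableAt).differentiableWithinAt
      · intro s hs
        rw [interior_Icc] at hs
        rw [(key s (lt_trans hr0 hs.1)).deriv]
        exact hDpos s hs.1.le (hlow s ⟨hs.1.le, hs.2⟩)
    intro s hs
    exact hmono ⟨le_rfl, ht⟩ hs hs.1
  -- Claim C1 : p' ≥ m on [r₀, ∞)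
  have C1 : ∀ r ≥ r₀, m ≤ deriv p r := by
    by_contra hc
    push_neg at hc
    obtain ⟨x₀, hx₀, hx₀'⟩ := hc
    set B := {x : ℝ | r₀ ≤ x ∧ deriv p x < m} with hB
    have hBne : B.Nonempty := ⟨x₀, hx₀, hx₀'⟩
    have hBbd : BddBelow B := ⟨r₀, fun x hx => hx.1⟩
    set T := sInf B with hT
    have hTr₀ : r₀ ≤ T := le_csInf hBne fun x hx => hx.1
    have hT0 : (0:ℝ) < T := lt_of_lt_of_le hr0 hTr₀
    have hIco : ∀ s ∈ Ico r₀ T, m ≤ deriv p s := by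
      intro s hs
      by_contra h
      push_neg at h
      exact absurd (csInf_le hBbd ⟨hs.1, h⟩) (not_le.mpr hs.2)
    have hgfT : ∀ s ∈ Icc r₀ T, gf r₀ ≤ gf s := lemA T hTr₀ hIco
    have hmono1 : MonotoneOn (deriv p) (Icc r₀ T) := by
      apply monotoneOn_of_deriv_nonneg (convex_Icc r₀ T) hp'c.continuousOn
        hp'd.differentiableOn
      intro s hs
      rw [interior_Icc] at hs
      rw [hode s hs.1.le]
      exact le_trans hg₀.le (hgfT s ⟨hs.1.le, hs.2.le⟩)
    have hp'T : m ≤ deriv p T :=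
      le_trans hp'r₀ (hmono1 ⟨le_rfl, hTr₀⟩ ⟨hTr₀, le_rfl⟩ hTr₀)
    have hgfTpos : 0 < gf T := lt_of_lt_of_le hg₀ (hgfT T ⟨hTr₀, le_rfl⟩)
    have hgfcAt : ContinuousAt gf T :=
      (hgfc.continuousAt (Ioi_mem_nhds hT0))
    have hev : ∀ᶠ x in nhds T, 0 < gf x := hgfcAt.eventually (eventually_gt_nhds hgfTpos)
    obtain ⟨δ, hδ, hball⟩ := Metric.eventually_nhds_iff.mp hev
    have hmono2 : MonotoneOn (deriv p) (Icc T (T + δ/2)) := by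
      apply monotoneOn_of_deriv_nonneg (convex_Icc _ _) hp'c.continuousOn
        hp'd.differentiableOn
      intro s hs
      rw [interior_Icc] at hs
      rw [hode s (le_trans hTr₀ hs.1.le)]
      refine le_of_lt (hball ?_)
      rw [Real.dist_eq, abs_lt]
      constructor <;> [linarith [hs.1]; linarith [hs.2]]
    obtain ⟨x, hxB, hxlt⟩ := exists_lt_of_csInf_lt hBne
      (show sInf B < T + δ/2 by rw [← hT]; linarith)
    have hxT : T ≤ x := csInf_le hBbd hxB
    have : m ≤ deriv p x :=
      le_trans hp'T (hmono2 ⟨le_rfl, by linarith⟩ ⟨hxT, hxlt.le⟩ hxT)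
    exact absurd this (not_le.mpr hxB.2)
  -- Claim C2 : gf ≥ gf r₀
  have C2 : ∀ r ≥ r₀, gf r₀ ≤ gf r := fun r hr =>
    lemA r hr (fun s hs => C1 s hs.1) r ⟨hr, le_rfl⟩
  refine ⟨fun r hr => ⟨C1 r hr, C2 r hr⟩, ?_⟩
  -- divergence
  have hlin : ∀ r ≥ r₀, deriv p r₀ + gf r₀ * (r - r₀) ≤ deriv p r := by
    intro r hr
    have hcont : Continuous (fun r : ℝ => deriv p r - gf r₀ * r) :=
      hp'c.sub (continuous_const.mul continuous_id)
    have hdiff : Differentiable ℝ (fun r : ℝ => deriv p r - gf r₀ * r) :=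
      hp'd.sub (differentiable_id.const_mul _)
    have hmono : MonotoneOn (fun r : ℝ => deriv p r - gf r₀ * r) (Ici r₀) := by
      apply monotoneOn_of_deriv_nonneg (convex_Ici r₀)
        hcont.continuousOn hdiff.differentiableOn
      intro s hs
      rw [interior_Ici] at hs
      have hds : HasDerivAt (fun r => deriv p r - gf r₀ * r)
          (deriv (deriv p) s - gf r₀) s := by
        exact (((hp'd s).hasDerivAt).sub ((hasDerivAt_id s).const_mul (gf r₀))).congr_deriv (by ring)
      rw [hds.deriv, hode s (le_of_lt hs)]
      have := C2 s (le_of_lt hs)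
      simp only [hgf] at this ⊢
      linarith
    have := hmono (self_mem_Ici) hr hr
    simp only [] at this
    linarith
  have htend : Filter.Tendsto (fun r => deriv p r₀ + gf r₀ * (r - r₀))
      Filter.atTop Filter.atTop := by
    apply Filter.tendsto_atTop_add_const_left
    apply Filter.Tendsto.const_mul_atTop hg₀
    exact Filter.tendsto_atTop_add_const_right _ _ Filter.tendsto_id
  apply Filter.tendsto_atTop_mono' Filter.atTop _ htend
  filter_upwards [Filter.eventually_ge_atTop r₀] with r hr
  exact hlin r hr
end
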